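/- The set ℳ₃ of triples (m₁,m₂,m₃) of natural numbers satisfying 2 ≤ m₁ ≤ m₂ ≤ m₃, Θ > 0, m₃ ≤ 4/Θ, β := 4/Θ a positive integer, β even and β²/2 divisible by each mᵢ, consists exactly of the 32 triples: (2,3,7), (2,3,8), (2,4,5), (2,3,9), (2,3,10), (2,3,12), (2,4,6), (3,3,4), (2,3,14), (2,5,5), (2,3,18), (2,4,8), (2,3,30), (2,5,6), (3,3,5), (2,4,12), (2,6,6), (3,3,6), (3,4,4), (2,4,20), (2,5,10), (2,6,9), (3,3,9), (2,8,8), (4,4,4), (2,7,14), (2,12,12), (3,4,12), (3,6,6), (4,4,6), (5,5,5), (4,8,8). -/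

import Mathlib

/-- The orbifold canonical degree `Θ` of a tuple of natural numbers (given as a list). -/
def thetaL (l : List ℕ) : ℚ := -2 + (l.map fun m => 1 - 1 / (m : ℚ)).sum

/-- Membership in `ℳ_r`: the entries are at least `2` and weakly increasing, `Θ > 0`,
every entry (equivalently, the largest entry `m_r`) is at most `β := 4/Θ`, `β` is a
positive integer, `β` is even, and `β²/2` is divisible by each entry. -/
def McondL (l : List ℕ) : Prop :=
  (∀ m ∈ l, 2 ≤ m) ∧ l.Pairwise (· ≤ ·) ∧ 0 < thetaL l ∧
    (∀ m ∈ l, (m : ℚ) ≤ 4 / thetaL l) ∧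
    ∃ n : ℕ, 0 < n ∧ (4 : ℚ) / thetaL l = n ∧ 2 ∣ n ∧ ∀ m ∈ l, m ∣ n ^ 2 / 2


/-!
Writing `Θ = 1 - 1/m₁ - 1/m₂ - 1/m₃`, the condition `m₃ ≤ 4/Θ` reads
`m₃ (m₁m₂ - m₁ - m₂) ≤ 5 m₁m₂`. Since `m₁ ≤ m₂ ≤ m₃` this forces `m₁ ≤ 7` and `m₂ ≤ 12`, and
since `1 - 1/m₁ - 1/m₂`, when positive, is at least `1/6` (attained at `(2, 3)`), also `m₃ ≤ 30`.
Membership in `ℳ` is decidable (`β` is an integer iff it equals its floor), so the remaining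
finite search is done by the kernel.
-/

theorem mul_le_six_mul_sub {a b : ℤ} (ha : 2 ≤ a) (hab : a ≤ b) (hpos : 0 < a * b - a - b) :
    a * b ≤ 6 * (a * b - a - b) := by
  rcases (show a = 2 ∨ 3 ≤ a by omega) with rfl | ha3
  · linarith
  · nlinarith

theorem triple_le_of_mul_le {a b c : ℤ} (ha : 2 ≤ a) (hab : a ≤ b) (hbc : b ≤ c)
    (hpos : 0 < a * b - a - b) (hle : c * (a * b - a - b) ≤ 5 * a * b) :
    a ≤ 7 ∧ b ≤ 12 ∧ c ≤ 30 := by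
  have hab0 : 0 < a * b := by nlinarith
  have hsub : a * b - a - b ≤ 5 * a := by
    refine le_of_mul_le_mul_left (a := b) ?_ (by linarith)
    nlinarith
  have ha7 : a ≤ 7 := by nlinarith
  have hb12 : b ≤ 12 := by nlinarith
  have hc30 : c ≤ 30 := by
    have h6 := mul_le_six_mul_sub ha hab hpos
    exact le_of_mul_le_mul_left (a := a * b) (by nlinarith) hab0
  exact ⟨ha7, hb12, hc30⟩

theorem thetaL_triple (a b c : ℕ) :
    thetaL [a, b, c] = 1 - 1 / (a : ℚ) - 1 / b - 1 / c := by
  simp only [thetaL, List.pure_def, List.bind_eq_flatMap, List.flatMap_cons, List.flatMap_nil,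
    List.append_nil, List.cons_append, List.nil_append, List.map_cons, List.map_nil, List.sum_cons,
    List.sum_nil]
  ring

theorem mul_sub_pos_and_mul_le_of_le_four_div {K : Type*} [Field K] [LinearOrder K]
    [IsStrictOrderedRing K] {x y z : K} (hx : 0 < x) (hy : 0 < y) (hz : 0 < z)
    (hθ : 0 < 1 - 1 / x - 1 / y - 1 / z) (hle : z ≤ 4 / (1 - 1 / x - 1 / y - 1 / z)) :
    0 < x * y - x - y ∧ z * (x * y - x - y) ≤ 5 * x * y := by
  have hzθ : z * (1 - 1 / x - 1 / y - 1 / z) ≤ 4 := (le_div_iff₀ hθ).1 hle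
  constructor
  · have : 0 < 1 - 1 / x - 1 / y := by linarith [one_div_pos.2 hz]
    calc 0 < x * y * (1 - 1 / x - 1 / y) := by positivity
      _ = x * y - x - y := by field_simp; ring
  · calc z * (x * y - x - y) = x * y * (z * (1 - 1 / x - 1 / y - 1 / z) + 1) := by
          field_simp
          ring
      _ ≤ x * y * 5 := by gcongr; linarith
      _ = 5 * x * y := by ring

theorem McondL.triple_lt {a b c : ℕ} (h : McondL [a, b, c]) : a < 8 ∧ b < 13 ∧ c < 31 := by
  obtain ⟨htwo, hsorted, hθ, hle, -⟩ := h
  simp only [List.mem_cons, List.not_mem_nil, or_false, forall_eq_or_imp, forall_eq] at htwo hle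
  simp only [List.pairwise_cons, List.mem_cons, List.not_mem_nil, or_false, forall_eq_or_imp,
    forall_eq] at hsorted
  rw [thetaL_triple] at hθ hle
  obtain ⟨ha, hb, hc⟩ := htwo
  obtain ⟨hpos, hmul⟩ := mul_sub_pos_and_mul_le_of_le_four_div (by positivity) (by positivity)
    (by positivity) hθ hle.2.2
  have := triple_le_of_mul_le (a := a) (b := b) (c := c) (by exact_mod_cast ha)
    (by exact_mod_cast hsorted.1.1) (by exact_mod_cast hsorted.2.1)
    (by exact_mod_cast hpos) (by exact_mod_cast hmul)
  omega

theorem Nat.exists_cast_eq_and_iff {R : Type*} [Semiring R] [LinearOrder R] [FloorSemiring R]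
    [IsStrictOrderedRing R] {q : R} {P : ℕ → Prop} :
    (∃ n : ℕ, q = n ∧ P n) ↔ q = ⌊q⌋₊ ∧ P ⌊q⌋₊ := by
  constructor
  · rintro ⟨n, rfl, hn⟩
    simpa using hn
  · exact fun h => ⟨_, h⟩

theorem mcondL_iff_floor (l : List ℕ) :
    McondL l ↔ (∀ m ∈ l, 2 ≤ m) ∧ l.Pairwise (· ≤ ·) ∧ 0 < thetaL l ∧
      (∀ m ∈ l, (m : ℚ) ≤ 4 / thetaL l) ∧ 4 / thetaL l = ⌊4 / thetaL l⌋₊ ∧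
      0 < ⌊4 / thetaL l⌋₊ ∧ 2 ∣ ⌊4 / thetaL l⌋₊ ∧ ∀ m ∈ l, m ∣ ⌊4 / thetaL l⌋₊ ^ 2 / 2 := by
  rw [McondL, ← Nat.exists_cast_eq_and_iff (P := fun n => 0 < n ∧ 2 ∣ n ∧ ∀ m ∈ l, m ∣ n ^ 2 / 2)]
  simp only [and_left_comm (a := 0 < _)]

instance (l : List ℕ) : Decidable (McondL l) := decidable_of_iff _ (mcondL_iff_floor l).symm

set_option synthInstance.maxSize 4000 in
theorem stmt_5 (m₁ m₂ m₃ : ℕ) :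
    McondL [m₁, m₂, m₃] ↔
      (m₁, m₂, m₃) ∈ ({(2,3,7), (2,3,8), (2,4,5), (2,3,9), (2,3,10), (2,3,12),
        (2,4,6), (3,3,4), (2,3,14), (2,5,5), (2,3,18), (2,4,8), (2,3,30),
        (2,5,6), (3,3,5), (2,4,12), (2,6,6), (3,3,6), (3,4,4), (2,4,20),
        (2,5,10), (2,6,9), (3,3,9), (2,8,8), (4,4,4), (2,7,14), (2,12,12),
        (3,4,12), (3,6,6), (4,4,6), (5,5,5), (4,8,8)} : Set (ℕ × ℕ × ℕ)) := by
  by_cases hbd : m₁ < 8 ∧ m₂ < 13 ∧ m₃ < 31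
  · obtain ⟨h₁, h₂, h₃⟩ := hbd
    -- one variable at a time, to reach the bounded form `∀ m₁ < 8, …` that `decide` handles
    revert m₃; revert m₂; revert m₁
    decide +kernel
  · refine ⟨fun h => absurd h.triple_lt hbd, fun h => ?_⟩
    simp only [Set.mem_insert_iff, Set.mem_singleton_iff, Prod.mk.injEq] at h
    omega
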